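/- arXiv:1406.4759 — 3 statements merged into one kernel-verified Lean document; each statement's English description precedes it below -/
import Mathlib

section
/- Fix b̄ > 0, K > 0, r₀ ∈ (0,1), and define φ : (0,∞) → (0,∞) by φ(x) = x^{b̄/4 - 1} for x ∈ (0, r₀/2), φ(x) = x^{-K-1} for x ∈ [r₀/2, 1), and φ(x) = 1 for x ∈ [1,∞). Then for every α ∈ (0, 1/2), every q ≥ 1, and every c > 0, there exist positive constants C and c' such that for all t ∈ (0,1] and all x⁰ ∈ [0, r₀]: ∫_{{x > 0 : |√x - √x⁰| > t^α}} exp(-qc(√x - √x⁰)²/(8t)) φ(x) dx ≤ C exp(-qc'/t^{1-2α}). -/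
open MeasureTheory Real Set

set_option maxHeartbeats 1000000 in
/-- Stretched-exponential decay of the Gaussian-weighted integral of the dominating weight `φ`
outside a `t^α`-neighborhood (in the square-root metric) of `x⁰`. -/
theorem gaussian_weighted_tail_estimate (b K r₀ : ℝ) (hb : 0 < b) (hK : 0 < K)
    (hr₀ : r₀ ∈ Set.Ioo (0:ℝ) 1)
    (φ : ℝ → ℝ)
    (hφ1 : ∀ x ∈ Set.Ioo (0:ℝ) (r₀ / 2), φ x = x ^ (b / 4 - 1))
    (hφ2 : ∀ x ∈ Set.Ico (r₀ / 2) (1:ℝ), φ x = x ^ (-K - 1))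
    (hφ3 : ∀ x ∈ Set.Ici (1:ℝ), φ x = 1)
    (α : ℝ) (hα : α ∈ Set.Ioo (0:ℝ) (1/2 : ℝ))
    (q : ℝ) (hq : 1 ≤ q) (c : ℝ) (hc : 0 < c) :
    ∃ C : ℝ, 0 < C ∧ ∃ c' : ℝ, 0 < c' ∧
      ∀ t ∈ Set.Ioc (0:ℝ) 1, ∀ x0 ∈ Set.Icc (0:ℝ) r₀,
        (∫ x in {x : ℝ | 0 < x ∧ t ^ α < |Real.sqrt x - Real.sqrt x0|},
            Real.exp (-(q * c * (Real.sqrt x - Real.sqrt x0) ^ 2) / (8 * t)) * φ x)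
          ≤ C * Real.exp (-(q * c') / t ^ (1 - 2 * α)) := by
  obtain ⟨hr0, hr1⟩ := hr₀
  obtain ⟨hα0, hα1⟩ := hα
  have hr2 : 0 < r₀ / 2 := by linarith
  have hr2' : r₀ / 2 < 1 := by linarith
  set φ₀ : ℝ → ℝ := fun x => if x < r₀ / 2 then x ^ (b / 4 - 1)
      else if x < 1 then x ^ (-K - 1) else 1 with hφ₀def
  have hφ₀meas : Measurable φ₀ := by
    apply Measurable.ite (measurableSet_lt measurable_id measurable_const)
      (by fun_prop)
    exact Measurable.ite (measurableSet_lt measurable_id measurable_const)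
      (by fun_prop) measurable_const
  have hφ₀eq : ∀ x ∈ Ioi (0:ℝ), φ x = φ₀ x := by
    intro x hx
    simp only [hφ₀def]
    by_cases h1 : x < r₀ / 2
    · rw [if_pos h1]; exact hφ1 x ⟨hx, h1⟩
    · rw [if_neg h1]
      by_cases h2 : x < 1
      · rw [if_pos h2]; exact hφ2 x ⟨not_lt.1 h1, h2⟩
      · rw [if_neg h2]; exact hφ3 x (not_lt.1 h2)
  have hφ₀nn : ∀ x ∈ Ioi (0:ℝ), 0 ≤ φ₀ x := by
    intro x hx
    simp only [hφ₀def]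
    split_ifs
    · exact (rpow_pos_of_pos hx _).le
    · exact (rpow_pos_of_pos hx _).le
    · exact zero_le_one
  set h : ℝ → ℝ := fun x => if x < 4 then φ₀ x else Real.exp (-(c/64) * x) with hhdef
  have hhmeas : Measurable h :=
    Measurable.ite (measurableSet_lt measurable_id measurable_const) hφ₀meas
      ((measurable_const.mul measurable_id).exp)
  have hhnn : ∀ x ∈ Ioi (0:ℝ), 0 ≤ h x := by
    intro x hx
    simp only [hhdef]
    split_ifs
    · exact hφ₀nn x hx
    · exact (Real.exp_pos _).le
  have hhint : IntegrableOn h (Ioi 0) := by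
    have hsplit : Ioi (0:ℝ) = Ioo 0 4 ∪ Ici 4 := (Ioo_union_Ici_eq_Ioi (by norm_num)).symm
    rw [hsplit, integrableOn_union]
    constructor
    · have h1 : Ioo (0:ℝ) 4 = Ioo 0 (r₀/2) ∪ Ico (r₀/2) 4 :=
        (Ioo_union_Ico_eq_Ioo hr2 (by linarith)).symm
      rw [h1, integrableOn_union]
      constructor
      · have hInt : IntegrableOn (fun x : ℝ => x ^ (b/4 - 1)) (Ioo 0 (r₀/2)) :=
          (intervalIntegral.integrableOn_Ioo_rpow_iff hr2).2 (by linarith)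
        apply hInt.congr_fun _ measurableSet_Ioo
        intro x hx
        simp only [hhdef, hφ₀def]
        rw [if_pos (by linarith [hx.2] : x < 4), if_pos hx.2]
      · apply Measure.integrableOn_of_bounded (M := max ((r₀/2) ^ (-K-1)) 1)
        · exact ((measure_mono Ico_subset_Icc_self).trans_lt measure_Icc_lt_top).ne
        · exact hhmeas.aestronglyMeasurable
        · rw [ae_restrict_iff' measurableSet_Ico]
          filter_upwards with x hx
          have hxpos : 0 < x := lt_of_lt_of_le hr2 hx.1
          simp only [hhdef, hφ₀def]
          rw [if_pos hx.2, if_neg (not_lt.2 hx.1)]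
          by_cases h2 : x < 1
          · rw [if_pos h2, Real.norm_eq_abs, abs_of_nonneg (rpow_pos_of_pos hxpos _).le]
            exact le_max_of_le_left
              (Real.rpow_le_rpow_of_nonpos hr2 hx.1 (by linarith))
          · rw [if_neg h2]; simp
    · have hInt : IntegrableOn (fun x : ℝ => Real.exp (-(c/64) * x)) (Ici 4) := by
        rw [integrableOn_Ici_iff_integrableOn_Ioi]
        exact exp_neg_integrableOn_Ioi 4 (by positivity)
      apply hInt.congr_fun _ measurableSet_Ici
      intro x hx
      simp only [hhdef]
      rw [if_neg (not_lt.2 hx)]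
  have hIntnn : 0 ≤ ∫ x in Ioi (0:ℝ), h x := setIntegral_nonneg measurableSet_Ioi hhnn
  refine ⟨(∫ x in Ioi (0:ℝ), h x) + 1, by linarith, c/16, by positivity, ?_⟩
  intro t ht x0 hx0
  obtain ⟨ht0, ht1⟩ := ht
  obtain ⟨hx00, hx0r⟩ := hx0
  set S : Set ℝ := {x : ℝ | 0 < x ∧ t ^ α < |Real.sqrt x - Real.sqrt x0|} with hSdef
  have hSmeas : MeasurableSet S := by
    have : S = Ioi 0 ∩ {x : ℝ | t ^ α < |Real.sqrt x - Real.sqrt x0|} := rfl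
    rw [this]
    exact measurableSet_Ioi.inter
      (measurableSet_lt measurable_const
        ((Real.continuous_sqrt.measurable.sub measurable_const).abs))
  have hSsub : S ⊆ Ioi 0 := fun x hx => hx.1
  set Et : ℝ := Real.exp (-(q * (c/16)) / t ^ (1 - 2*α)) with hEtdef
  have htp : (0:ℝ) < t ^ (1 - 2*α) := rpow_pos_of_pos ht0 _
  have ht2a : (0:ℝ) < t ^ (2*α) := rpow_pos_of_pos ht0 _
  have htmul : t ^ (1 - 2*α) * t ^ (2*α) = t := by
    rw [← Real.rpow_add ht0]; norm_num
  -- the key pointwise bound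
  have key : ∀ x ∈ S,
      Real.exp (-(q * c * (Real.sqrt x - Real.sqrt x0) ^ 2) / (8 * t)) * φ₀ x
        ≤ Et * h x := by
    intro x hx
    obtain ⟨hxpos, hxfar⟩ := hx
    set s : ℝ := Real.sqrt x - Real.sqrt x0 with hsdef
    have hu : t ^ (2*α) < s ^ 2 := by
      have h1 : (t ^ α) ^ 2 < |s| ^ 2 :=
        pow_lt_pow_left₀ hxfar (rpow_nonneg ht0.le _) (by norm_num)
      have h2 : t ^ (2*α) = (t ^ α) ^ 2 := by
        rw [← Real.rpow_natCast (t ^ α) 2, ← Real.rpow_mul ht0.le]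
        norm_num [mul_comm]
      rw [h2, ← sq_abs s]; exact h1
    have hu0 : (0:ℝ) ≤ s ^ 2 := sq_nonneg s
    have e1 : q * (c/16) / t ^ (1 - 2*α) ≤ q * c * s ^ 2 / (16 * t) := by
      rw [div_le_div_iff₀ htp (by positivity)]
      have hqc : (0:ℝ) < q * c := by positivity
      have hstep : q * c * (t ^ (2*α) * t ^ (1 - 2*α)) ≤ q * c * (s ^ 2 * t ^ (1 - 2*α)) :=
        mul_le_mul_of_nonneg_left (mul_le_mul_of_nonneg_right hu.le htp.le) hqc.le
      have heq : q * (c/16) * (16 * t) = q * c * (t ^ (2*α) * t ^ (1 - 2*α)) := by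
        rw [show t ^ (2*α) * t ^ (1 - 2*α) = t ^ (1 - 2*α) * t ^ (2*α) by ring, htmul]; ring
      rw [heq]
      calc q * c * (t ^ (2*α) * t ^ (1 - 2*α)) ≤ q * c * (s ^ 2 * t ^ (1 - 2*α)) := hstep
        _ = q * c * s ^ 2 * t ^ (1 - 2*α) := by ring
    have e2 : c * s ^ 2 / 16 ≤ q * c * s ^ 2 / (16 * t) := by
      rw [div_le_div_iff₀ (by norm_num) (by positivity)]
      nlinarith [mul_nonneg hc.le hu0, ht0, ht1, hq]
    have eA : -(q * c * s ^ 2) / (8 * t)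
        ≤ -(q * (c/16)) / t ^ (1 - 2*α) + -(c * s ^ 2 / 16) := by
      have : q * c * s ^ 2 / (8 * t) = q * c * s ^ 2 / (16 * t) + q * c * s ^ 2 / (16 * t) := by
        ring
      rw [neg_div, neg_div]
      linarith [e1, e2, this]
    have hexp : Real.exp (-(q * c * s ^ 2) / (8 * t)) ≤ Et * Real.exp (-(c * s ^ 2 / 16)) := by
      rw [hEtdef, ← Real.exp_add]
      exact Real.exp_le_exp.2 eA
    have hφnn := hφ₀nn x hxpos
    by_cases h4 : x < 4
    · have hh4 : h x = φ₀ x := by simp only [hhdef]; rw [if_pos h4]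
      rw [hh4]
      calc Real.exp (-(q * c * s ^ 2) / (8 * t)) * φ₀ x
          ≤ Et * Real.exp (-(c * s ^ 2 / 16)) * φ₀ x :=
            mul_le_mul_of_nonneg_right hexp hφnn
        _ ≤ Et * φ₀ x := by
            have h1 : Real.exp (-(c * s ^ 2 / 16)) ≤ 1 :=
              Real.exp_le_one_iff.2 (neg_nonpos.2 (by positivity))
            have h2 : Et * Real.exp (-(c * s ^ 2 / 16)) ≤ Et * 1 :=
              mul_le_mul_of_nonneg_left h1 (Real.exp_pos _).le
            have h3 := mul_le_mul_of_nonneg_right h2 hφnn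
            simpa using h3
    · have hx4 : (4:ℝ) ≤ x := not_lt.1 h4
      have hφ1' : φ₀ x = 1 := by
        simp only [hφ₀def]
        rw [if_neg (by linarith : ¬ x < r₀/2), if_neg (by linarith : ¬ x < 1)]
      have hh4 : h x = Real.exp (-(c/64) * x) := by
        simp only [hhdef]; rw [if_neg h4]
      have hsx : Real.sqrt x / 2 ≤ s := by
        have h1 : Real.sqrt x0 ≤ 1 := by
          rw [show (1:ℝ) = Real.sqrt 1 by rw [Real.sqrt_one]]
          exact Real.sqrt_le_sqrt (by linarith)
        have h2 : (2:ℝ) ≤ Real.sqrt x := by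
          rw [show (2:ℝ) = Real.sqrt 4 by
            rw [show (4:ℝ) = 2^2 by norm_num, Real.sqrt_sq (by norm_num)]]
          exact Real.sqrt_le_sqrt hx4
        simp only [hsdef]
        linarith
      have hsq : x / 4 ≤ s ^ 2 := by
        have h0 : (0:ℝ) ≤ Real.sqrt x / 2 := by positivity
        have := mul_le_mul hsx hsx h0 (le_trans h0 hsx)
        have hxx : Real.sqrt x * Real.sqrt x = x := Real.mul_self_sqrt hxpos.le
        nlinarith
      have hexp2 : Real.exp (-(c * s ^ 2 / 16)) ≤ Real.exp (-(c/64) * x) := by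
        apply Real.exp_le_exp.2
        have := mul_le_mul_of_nonneg_left hsq hc.le
        linarith
      rw [hφ1', hh4, mul_one]
      calc Real.exp (-(q * c * s ^ 2) / (8 * t))
          ≤ Et * Real.exp (-(c * s ^ 2 / 16)) := hexp
        _ ≤ Et * Real.exp (-(c/64) * x) :=
            mul_le_mul_of_nonneg_left hexp2 (Real.exp_pos _).le
  -- measurability of the explicit integrand
  have hf₀meas : Measurable (fun x => Real.exp (-(q * c * (Real.sqrt x - Real.sqrt x0) ^ 2)
      / (8 * t)) * φ₀ x) := by
    apply Measurable.mul _ hφ₀meas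
    exact (((((Real.continuous_sqrt.measurable.sub measurable_const).pow_const 2).const_mul
      (q * c)).neg).div_const _).exp
  have hgint : IntegrableOn (fun x => Et * h x) (Ioi 0) := hhint.const_mul Et
  have hgintS : IntegrableOn (fun x => Et * h x) S := hgint.mono_set hSsub
  have hf₀int : IntegrableOn (fun x => Real.exp (-(q * c * (Real.sqrt x - Real.sqrt x0) ^ 2)
      / (8 * t)) * φ₀ x) S := by
    apply hgintS.mono' hf₀meas.aestronglyMeasurable.restrict
    rw [ae_restrict_iff' hSmeas]
    filter_upwards with x hx
    rw [Real.norm_eq_abs, abs_of_nonneg (mul_nonneg (Real.exp_pos _).le (hφ₀nn x (hSsub hx)))]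
    exact key x hx
  calc (∫ x in S, Real.exp (-(q * c * (Real.sqrt x - Real.sqrt x0) ^ 2) / (8 * t)) * φ x)
      = ∫ x in S, Real.exp (-(q * c * (Real.sqrt x - Real.sqrt x0) ^ 2) / (8 * t)) * φ₀ x := by
        apply setIntegral_congr_fun hSmeas
        intro x hx
        simp only [hφ₀eq x (hSsub hx)]
    _ ≤ ∫ x in S, Et * h x := setIntegral_mono_on hf₀int hgintS hSmeas key
    _ ≤ ∫ x in Ioi (0:ℝ), Et * h x := by
        apply setIntegral_mono_set hgint
        · filter_upwards [ae_restrict_mem measurableSet_Ioi] with x hx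
          exact mul_nonneg (Real.exp_pos _).le (hhnn x hx)
        · exact HasSubset.Subset.eventuallyLE hSsub
    _ = Et * ∫ x in Ioi (0:ℝ), h x := integral_const_mul Et _
    _ ≤ ((∫ x in Ioi (0:ℝ), h x) + 1) * Et := by
        have hEt0 : (0:ℝ) < Et := Real.exp_pos _
        nlinarith
    _ = ((∫ x in Ioi (0:ℝ), h x) + 1) * Real.exp (-(q * (c/16)) / t ^ (1 - 2*α)) := rfl
end

section
/- Suppose I : (c, 1] → (0, ∞) is such that β ↦ β I(β) is nondecreasing on (c,1], where c ∈ (√(2/3), 1), and suppose there exist constants C > 0, θ ∈ (0,1), m ≥ 0, and p > 1 with θ p < 1, such that for all α ∈ (√(2/3), 1) and β ∈ (α, 1): ln I(α) ≤ C + ((m+1)θ/6) · (- ln(β - α)) + θ ln I(β). Then substituting α = β^p, dividing by β, and integrating over β ∈ (c^{1/p}, 1) yields (1/p) ∫_c^1 (ln I(β))/β dβ ≤ C' + θ ∫_c^1 (ln I(β))/β dβ for some constant C' depending on C, m, θ, p, c; hence ∫_c^1 (ln I(β))/β dβ ≤ C'/(1/p - θ) and consequently ln I(c) ≤ C'' for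 a constant C'' depending only on C, m, θ, p, c. -/
open MeasureTheory Real

set_option maxHeartbeats 1000000

lemma log_intervalIntegrable_aux {a : ℝ} (ha : 0 ≤ a) (ha1 : a ≤ 1) :
    IntervalIntegrable Real.log volume 0 a := by
  rw [intervalIntegrable_iff_integrableOn_Ioc_of_le ha]
  refine Integrable.mono' (g := fun x : ℝ => 2 * x ^ (-(1/2) : ℝ)) ?_
    Real.measurable_log.aestronglyMeasurable ?_
  · have h := intervalIntegral.intervalIntegrable_rpow' (a := 0) (b := a)
      (r := -(1/2)) (by norm_num)
    exact ((intervalIntegrable_iff_integrableOn_Ioc_of_le ha).mp h).const_mul 2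
  · filter_upwards [ae_restrict_mem measurableSet_Ioc] with x hx
    have hx0 : 0 < x := hx.1
    have hx1 : x ≤ 1 := hx.2.trans ha1
    have hlog : Real.log x ≤ 0 := Real.log_nonpos hx0.le hx1
    rw [Real.norm_eq_abs, abs_of_nonpos hlog]
    have hs : 0 < Real.sqrt x := Real.sqrt_pos.mpr hx0
    have h1 : -Real.log x = 2 * (-Real.log (Real.sqrt x)) := by
      rw [Real.log_sqrt hx0.le]; ring
    have h2 : -Real.log (Real.sqrt x) = Real.log (Real.sqrt x)⁻¹ := (Real.log_inv _).symm
    have h3 : Real.log (Real.sqrt x)⁻¹ ≤ (Real.sqrt x)⁻¹ :=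
      le_trans (Real.log_le_sub_one_of_pos (inv_pos.mpr hs)) (by linarith)
    have h4 : x ^ (-(1/2) : ℝ) = (Real.sqrt x)⁻¹ := by
      rw [Real.rpow_neg hx0.le, ← Real.sqrt_eq_rpow]
    rw [h4]; linarith

/-- Fabes–Stroock bootstrapping argument: a functional inequality relating `ln I` at scale
`α = β^p` to `ln I` at scale `β` with sublinear coefficient `θ`, together with monotonicity
of `β ↦ β I(β)`, forces a uniform bound on `∫_c^1 ln I(β)/β dβ` and hence on `ln I(c)`. -/
theorem fabes_stroock_bootstrap (C θ m p c : ℝ) (hC : 0 < C)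
    (hθ0 : 0 < θ) (hθ1 : θ < 1) (hm : 0 ≤ m) (hp : 1 < p) (hθp : θ * p < 1)
    (hc1 : Real.sqrt (2/3) < c) (hc2 : c < 1) :
    ∃ C' C'' : ℝ, ∀ I : ℝ → ℝ,
      (∀ β ∈ Set.Icc c 1, 0 < I β) →
      MonotoneOn (fun β => β * I β) (Set.Icc c 1) →
      (∀ α : ℝ, Real.sqrt (2/3) < α → α < 1 → ∀ β : ℝ, α < β → β < 1 →
        Real.log (I α) ≤ C + ((m + 1) * θ / 6) * (-Real.log (β - α)) + θ * Real.log (I β)) →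
      ((1 / p) * (∫ β in c..(1:ℝ), Real.log (I β) / β)
          ≤ C' + θ * ∫ β in c..(1:ℝ), Real.log (I β) / β) ∧
      ((∫ β in c..(1:ℝ), Real.log (I β) / β) ≤ C' / (1 / p - θ)) ∧
      Real.log (I c) ≤ C'' := by
  have hc0 : 0 < c := lt_trans (Real.sqrt_pos.mpr (by norm_num)) hc1
  have h1θ : 0 < 1 - θ := by linarith
  set A : ℝ := (m + 1) * θ / 6 with hA_def
  have hA : 0 ≤ A := div_nonneg (mul_nonneg (by linarith) hθ0.le) (by norm_num)
  set E : ℝ := A / (1 - θ) with hE_def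
  have hE : 0 ≤ E := div_nonneg hA h1θ.le
  have hAE : A + θ * E = E := by rw [hE_def]; field_simp; ring
  set D : ℝ := (C + E * Real.log 2) / (1 - θ) with hD_def
  have hD : (1 - θ) * D = C + E * Real.log 2 := by rw [hD_def]; field_simp
  set B : ℝ := ∫ β in c..(1:ℝ), (|D| + E * (-Real.log (1 - β))) / c with hB_def
  have hsub : 0 < 1 / p - θ := by
    have hp0 : (0:ℝ) < p := by linarith
    rw [sub_pos, lt_div_iff₀ hp0]; linarith
  refine ⟨(1 / p - θ) * max B 0, D + E * (-Real.log (1 - c)), fun I hI1 hI2 hI3 => ?_⟩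
  -- upper bound from monotonicity
  have hub : ∀ β ∈ Set.Icc c 1, Real.log (I β) ≤ Real.log (I 1) - Real.log c := by
    intro β hβ
    have hβ0 : 0 < β := lt_of_lt_of_le hc0 hβ.1
    have h1 : β * I β ≤ 1 * I 1 :=
      hI2 hβ (Set.mem_Icc.mpr ⟨hc2.le, le_refl 1⟩) hβ.2
    have hI1β := hI1 β hβ
    have hI11 := hI1 1 (Set.mem_Icc.mpr ⟨hc2.le, le_refl 1⟩)
    have h2 : I β ≤ I 1 / β := by
      rw [le_div_iff₀ hβ0]; nlinarith
    calc Real.log (I β) ≤ Real.log (I 1 / β) := Real.log_le_log hI1β h2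
      _ = Real.log (I 1) - Real.log β := Real.log_div (ne_of_gt hI11) (ne_of_gt hβ0)
      _ ≤ Real.log (I 1) - Real.log c := by
          have := Real.log_le_log hc0 hβ.1; linarith
  -- lower bound from monotonicity
  have hlb : ∀ β ∈ Set.Icc c 1, Real.log (c * I c) ≤ Real.log (I β) := by
    intro β hβ
    have hβ0 : 0 < β := lt_of_lt_of_le hc0 hβ.1
    have h1 : c * I c ≤ β * I β :=
      hI2 (Set.mem_Icc.mpr ⟨le_refl c, hc2.le⟩) hβ hβ.1
    have hI1β := hI1 β hβ
    have h2 : c * I c ≤ I β := by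
      nlinarith [mul_nonneg (sub_nonneg.mpr hβ.2) hI1β.le]
    exact Real.log_le_log (mul_pos hc0 (hI1 c (Set.mem_Icc.mpr ⟨le_refl c, hc2.le⟩))) h2
  -- positivity of u on [c,1)
  have hu : ∀ α : ℝ, c ≤ α → α < 1 → 0 ≤ -Real.log (1 - α) := by
    intro α h1 h2
    have : Real.log (1 - α) ≤ 0 := Real.log_nonpos (by linarith) (by linarith)
    linarith
  -- sup absorption argument
  set g : ℝ → ℝ := fun α => Real.log (I α) - E * (-Real.log (1 - α)) with hg_def
  have hgne : (g '' Set.Ico c 1).Nonempty := ⟨g c, ⟨c, ⟨le_refl c, hc2⟩, rfl⟩⟩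
  have hgbdd : BddAbove (g '' Set.Ico c 1) := by
    refine ⟨Real.log (I 1) - Real.log c, ?_⟩
    rintro _ ⟨α, hα, rfl⟩
    have h1 := hub α ⟨hα.1, hα.2.le⟩
    have h2 := mul_nonneg hE (hu α hα.1 hα.2)
    simp only [hg_def]; linarith
  set S : ℝ := sSup (g '' Set.Ico c 1) with hS_def
  have hgS : ∀ α ∈ Set.Ico c 1, g α ≤ C + E * Real.log 2 + θ * S := by
    intro α hα
    obtain ⟨hαc, hα1⟩ := hα
    set β : ℝ := (1 + α) / 2 with hβ_def
    have hαβ : α < β := by rw [hβ_def]; linarith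
    have hβ1 : β < 1 := by rw [hβ_def]; linarith
    have hβc : c ≤ β := le_of_lt (lt_of_le_of_lt hαc hαβ)
    have key := hI3 α (lt_of_lt_of_le hc1 hαc) hα1 β hαβ hβ1
    have hβα : β - α = (1 - α) / 2 := by rw [hβ_def]; ring
    have h1β : (1:ℝ) - β = (1 - α) / 2 := by rw [hβ_def]; ring
    have hlog2 : Real.log ((1 - α) / 2) = Real.log (1 - α) - Real.log 2 :=
      Real.log_div (ne_of_gt (by linarith : (0:ℝ) < 1 - α)) two_ne_zero
    have hgβ : g β ≤ S := le_csSup hgbdd ⟨β, ⟨hβc, hβ1⟩, rfl⟩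
    have hfβ : Real.log (I β) ≤ S + E * (-Real.log (1 - α) + Real.log 2) := by
      simp only [hg_def] at hgβ
      rw [h1β, hlog2] at hgβ
      linarith
    rw [hβα, hlog2] at key
    have hkey2 : θ * Real.log (I β) ≤ θ * (S + E * (-Real.log (1 - α) + Real.log 2)) :=
      mul_le_mul_of_nonneg_left hfβ hθ0.le
    have hEX : A * (-Real.log (1 - α) + Real.log 2)
        + θ * E * (-Real.log (1 - α) + Real.log 2)
        = E * (-Real.log (1 - α) + Real.log 2) := by
      linear_combination hAE * (-Real.log (1 - α) + Real.log 2)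
    have e1 : θ * (S + E * (-Real.log (1 - α) + Real.log 2))
        = θ * S + θ * E * (-Real.log (1 - α) + Real.log 2) := by ring
    have e2 : A * -(Real.log (1 - α) - Real.log 2)
        = A * (-Real.log (1 - α) + Real.log 2) := by ring
    have e3 : E * (-Real.log (1 - α) + Real.log 2)
        = E * (-Real.log (1 - α)) + E * Real.log 2 := by ring
    simp only [hg_def]
    linarith [key, hkey2, hEX, e1, e2, e3]
  have hSD : S ≤ D := by
    have h1 : S ≤ C + E * Real.log 2 + θ * S := by
      apply csSup_le hgne
      rintro _ ⟨α, hα, rfl⟩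
      exact hgS α hα
    have h2 : (1 - θ) * S ≤ (1 - θ) * D := by rw [hD]; linarith
    exact le_of_mul_le_mul_left h2 h1θ
  have hpoint : ∀ α ∈ Set.Ico c 1, Real.log (I α) ≤ D + E * (-Real.log (1 - α)) := by
    intro α hα
    have h1 : g α ≤ S := le_csSup hgbdd ⟨α, hα, rfl⟩
    simp only [hg_def] at h1
    linarith
  -- measurability
  have hmeas : AEMeasurable I (volume.restrict (Set.Ioc c 1)) := by
    have h1 : AEMeasurable (fun β => β * I β) (volume.restrict (Set.Icc c 1)) :=
      aemeasurable_restrict_of_monotoneOn measurableSet_Icc hI2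
    have h2 : AEMeasurable (fun β => β * I β) (volume.restrict (Set.Ioc c 1)) :=
      h1.mono_measure (Measure.restrict_mono Set.Ioc_subset_Icc_self le_rfl)
    have h3 : AEMeasurable (fun β : ℝ => (β * I β) * β⁻¹) (volume.restrict (Set.Ioc c 1)) :=
      h2.mul (measurable_inv.aemeasurable)
    refine h3.congr ?_
    filter_upwards [ae_restrict_mem measurableSet_Ioc] with β hβ
    have hβ0 : β ≠ 0 := ne_of_gt (lt_trans hc0 hβ.1)
    field_simp
  -- integrability of log I(β)/β
  have hfint : IntervalIntegrable (fun β => Real.log (I β) / β) volume c 1 := by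
    rw [intervalIntegrable_iff_integrableOn_Ioc_of_le hc2.le]
    refine Integrable.mono'
      (g := fun _ : ℝ => (max |Real.log (c * I c)| |Real.log (I 1) - Real.log c|) / c)
      (integrable_const _)
      (((Real.measurable_log.comp_aemeasurable hmeas).div aemeasurable_id).aestronglyMeasurable) ?_
    filter_upwards [ae_restrict_mem measurableSet_Ioc] with β hβ
    have hβIcc : β ∈ Set.Icc c 1 := ⟨hβ.1.le, hβ.2⟩
    have hβ0 : 0 < β := lt_trans hc0 hβ.1
    have h1 := hub β hβIcc
    have h2 := hlb β hβIcc
    have habs : |Real.log (I β)| ≤ max |Real.log (c * I c)| |Real.log (I 1) - Real.log c| := by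
      rw [abs_le]
      constructor
      · have := neg_abs_le (Real.log (c * I c)); have := le_max_left |Real.log (c * I c)| |Real.log (I 1) - Real.log c|; linarith
      · have := le_abs_self (Real.log (I 1) - Real.log c); have := le_max_right |Real.log (c * I c)| |Real.log (I 1) - Real.log c|; linarith
    rw [Real.norm_eq_abs, abs_div, abs_of_pos hβ0]
    gcongr
    exact hβ.1.le
  -- integrability of the bound
  have hlogint : IntervalIntegrable (fun β => Real.log (1 - β)) volume c 1 := by
    have h1 : IntervalIntegrable Real.log volume 0 (1 - c) :=
      log_intervalIntegrable_aux (by linarith) (by linarith)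
    have h2 := h1.comp_sub_left 1
    simp only [sub_zero, sub_sub_cancel] at h2
    exact h2.symm
  have hgint : IntervalIntegrable (fun β => (|D| + E * (-Real.log (1 - β))) / c) volume c 1 := by
    exact ((intervalIntegrable_const.add ((hlogint.neg).const_mul E)).div_const c)
  -- bound the integral
  have hJB : (∫ β in c..(1:ℝ), Real.log (I β) / β) ≤ B := by
    rw [hB_def]
    apply intervalIntegral.integral_mono_ae_restrict hc2.le hfint hgint
    have hne : ∀ᵐ β ∂(volume.restrict (Set.Icc c 1)), β ≠ 1 := by
      apply ae_restrict_of_ae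
      have : ({(1:ℝ)} : Set ℝ) = {β : ℝ | ¬ β ≠ 1} := by ext x; simp
      rw [ae_iff, ← this]
      exact measure_singleton 1
    filter_upwards [ae_restrict_mem measurableSet_Icc, hne] with β hβ hβ1
    have hβIco : β ∈ Set.Ico c 1 := ⟨hβ.1, lt_of_le_of_ne hβ.2 hβ1⟩
    have hβ0 : 0 < β := lt_of_lt_of_le hc0 hβ.1
    have h1 := hpoint β hβIco
    have h2 : Real.log (I β) ≤ |D| + E * (-Real.log (1 - β)) := by
      have := le_abs_self D; linarith
    have h3 : 0 ≤ |D| + E * (-Real.log (1 - β)) := by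
      have := mul_nonneg hE (hu β hβIco.1 hβIco.2); positivity
    calc Real.log (I β) / β ≤ (|D| + E * (-Real.log (1 - β))) / β := by gcongr
      _ ≤ (|D| + E * (-Real.log (1 - β))) / c := by gcongr; exact hβIco.1
  refine ⟨?_, ?_, ?_⟩
  · have h1 : (1 / p - θ) * (∫ β in c..(1:ℝ), Real.log (I β) / β)
        ≤ (1 / p - θ) * max B 0 :=
      mul_le_mul_of_nonneg_left (hJB.trans (le_max_left B 0)) hsub.le
    linarith
  · rw [mul_comm, mul_div_assoc, div_self (ne_of_gt hsub), mul_one]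
    exact hJB.trans (le_max_left B 0)
  · exact hpoint c ⟨le_refl c, hc2⟩
end

section
/- Let ρ be a metric on the closed orthant S̄ = [0,∞) such that there is c > 0 with c|√x - √y| ≤ ρ(x,y) ≤ c^{-1}|√x - √y| for x, y ∈ [0,1], and c|x - y| ≤ ρ(x,y) ≤ c^{-1}|x - y| for x, y ∈ [1,∞). Then for every β > 0 there exist constants 0 < C₁ ≤ C₂ and r₀ > 0 such that for all x⁰ ∈ [0, r₀] and r ∈ (0, r₀/2), the weighted measure μ(B_r(x⁰)) = ∫_{B_r(x⁰)} x^{β-1} dx of the metric ball B_r(x⁰) = {x ≥ 0 : ρ(x⁰,x) < r} satisfies C₁ r (max(√x⁰, r))^{2β-1} ≤ μ(B_r(x⁰)) ≤ C₂ r (max(√x⁰, r))^{2β-1}. -/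
/-!
In square-root coordinates the ball `B_r(x⁰)` is squeezed between the Euclidean balls of radii
`c r` and `r / c` around `√x⁰`, as long as it stays inside `[0, 1]`. For small `x⁰` and `r` it
does, because `ρ(0, ·)` is bounded below by a positive constant on `[1, ∞)`: it is continuous and
positive there, and grows linearly at infinity. Substituting `x = y²` turns `x^(β-1) dx` into
`2 y^(2β-1) dy`, so the ball of radius `s` around `√x⁰` has measure
`((√x⁰ + s)^(2β) - (√x⁰ - s)₊^(2β)) / β`, and the mean value theorem for `y ↦ y^(2β)` on dyadic
intervals makes this comparable to `s · max(√x⁰, s)^(2β-1)`.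
-/

open MeasureTheory Real Set

theorem rpow_le_rpow_abs_mul (q : ℝ) {k m t : ℝ} (hk : 1 ≤ k) (hm : 0 < m)
    (ht : t ∈ Icc (m / k) (k * m)) : t ^ q ≤ k ^ |q| * m ^ q := by
  have hk0 : 0 < k := by linarith
  have ht0 : 0 < t := lt_of_lt_of_le (by positivity) ht.1
  rcases le_or_gt 0 q with hq | hq
  · calc t ^ q ≤ (k * m) ^ q := rpow_le_rpow ht0.le ht.2 hq
      _ = k ^ |q| * m ^ q := by rw [mul_rpow hk0.le hm.le, abs_of_nonneg hq]
  · calc t ^ q ≤ (m / k) ^ q := rpow_le_rpow_of_nonpos (by positivity) ht.1 hq.le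
      _ = k ^ |q| * m ^ q := by
        rw [div_rpow hm.le hk0.le, abs_of_neg hq, rpow_neg hk0.le]; ring

theorem rpow_div_rpow_abs_le (q : ℝ) {k m t : ℝ} (hk : 1 ≤ k) (hm : 0 < m)
    (ht : t ∈ Icc (m / k) (k * m)) : m ^ q / k ^ |q| ≤ t ^ q := by
  have hk0 : 0 < k := by linarith
  have ht0 : 0 < t := lt_of_lt_of_le (by positivity) ht.1
  have hmt : m ∈ Icc (t / k) (k * t) :=
    ⟨by rw [div_le_iff₀ hk0]; linarith [ht.2], by rw [← div_le_iff₀' hk0]; exact ht.1⟩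
  rw [div_le_iff₀' (by positivity)]
  exact rpow_le_rpow_abs_mul q hk ht0 hmt

theorem rpow_sub_rpow_mem_Icc {p k m a b : ℝ} (hp : 0 ≤ p) (hk : 1 ≤ k) (hm : 0 < m)
    (ha : a ∈ Icc (m / k) (k * m)) (hb : b ∈ Icc (m / k) (k * m)) (hab : a ≤ b) :
    b ^ p - a ^ p ∈ Icc (p * (m ^ (p - 1) / k ^ |p - 1|) * (b - a))
      (p * (k ^ |p - 1| * m ^ (p - 1)) * (b - a)) := by
  rcases hab.eq_or_lt with rfl | hab
  · simp
  have ha0 : 0 < a := lt_of_lt_of_le (div_pos hm (by linarith)) ha.1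
  obtain ⟨ξ, hξ, hslope⟩ := exists_hasDerivAt_eq_slope (fun x => x ^ p)
    (fun x => p * x ^ (p - 1)) hab
    (continuousOn_id.rpow_const fun x hx => Or.inl (ha0.trans_le hx.1).ne')
    (fun x hx => hasDerivAt_rpow_const (Or.inl (ha0.trans hx.1).ne'))
  have hξ' : ξ ∈ Icc (m / k) (k * m) := ⟨ha.1.trans hξ.1.le, hξ.2.le.trans hb.2⟩
  have hdiff : b ^ p - a ^ p = p * ξ ^ (p - 1) * (b - a) := by
    rw [hslope, div_mul_cancel₀ _ (sub_pos.mpr hab).ne']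
  rw [hdiff]
  have hba : 0 ≤ b - a := by linarith
  exact ⟨by gcongr; exact rpow_div_rpow_abs_le _ hk hm hξ',
    by gcongr; exact rpow_le_rpow_abs_mul _ hk hm hξ'⟩

theorem mul_rpow_div_le_add_rpow_sub_max_rpow {p A s : ℝ} (hp : 0 < p) (hA : 0 ≤ A)
    (hs : 0 < s) :
    p * (max A s ^ (p - 1) / 2 ^ |p - 1|) * (s / 2) ≤ (A + s) ^ p - max (A - s) 0 ^ p := by
  have hm : 0 < max A s := lt_max_of_lt_right hs
  have hu : A + s ∈ Icc (max A s / 2) (2 * max A s) :=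
    ⟨by linarith [max_le_add_of_nonneg hA hs.le], by linarith [le_max_left A s, le_max_right A s]⟩
  have ha : A + s / 2 ∈ Icc (max A s / 2) (2 * max A s) :=
    ⟨by linarith [max_le_add_of_nonneg hA hs.le], by linarith [le_max_left A s, le_max_right A s]⟩
  have hl : max (A - s) 0 ^ p ≤ (A + s / 2) ^ p :=
    rpow_le_rpow (le_max_right _ _) (max_le (by linarith) (by positivity)) hp.le
  have hmvt := (rpow_sub_rpow_mem_Icc hp.le one_le_two hm ha hu (by linarith)).1
  rw [show A + s - (A + s / 2) = s / 2 by ring] at hmvt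
  linarith

theorem add_rpow_sub_max_rpow_le {p A s : ℝ} (hp : 0 < p) (hA : 0 ≤ A) (hs : 0 < s) :
    (A + s) ^ p - max (A - s) 0 ^ p ≤ (2 * p + 4) * (2 ^ |p - 1| * max A s ^ (p - 1)) * s := by
  set l := max (A - s) 0
  set m := max A s
  have hm : 0 < m := lt_max_of_lt_right hs
  have hmu : m ≤ A + s := max_le_add_of_nonneg hA hs.le
  have hu : A + s ∈ Icc (m / 2) (2 * m) :=
    ⟨by linarith, by linarith [le_max_left A s, le_max_right A s]⟩
  have hlu : l ≤ A + s := max_le (by linarith) (by positivity)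
  have hsp : 0 ≤ p * (2 ^ |p - 1| * m ^ (p - 1)) * s := by positivity
  rcases le_or_gt (m / 2) l with hlm | hlm
  · have hl : l ∈ Icc (m / 2) (2 * m) := ⟨hlm, hlu.trans hu.2⟩
    calc (A + s) ^ p - l ^ p ≤ p * (2 ^ |p - 1| * m ^ (p - 1)) * (A + s - l) :=
          (rpow_sub_rpow_mem_Icc hp.le one_le_two hm hl hu hlu).2
      _ ≤ p * (2 ^ |p - 1| * m ^ (p - 1)) * (2 * s) := by
          gcongr; linarith [le_max_left (A - s) 0]
      _ ≤ (2 * p + 4) * (2 ^ |p - 1| * m ^ (p - 1)) * s := by nlinarith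
  · -- near the boundary `A + s ≤ 4 s`, so `(A + s) ^ p` alone is already small enough
    have hu4 : A + s ≤ 4 * s := by linarith [le_max_left (A - s) 0]
    calc (A + s) ^ p - l ^ p ≤ (A + s) * (A + s) ^ (p - 1) := by
          rw [rpow_sub_one (by positivity), mul_div_cancel₀ _ (by positivity)]
          linarith [rpow_nonneg (le_max_right (A - s) 0) p]
      _ ≤ (4 * s) * (2 ^ |p - 1| * m ^ (p - 1)) := by
          gcongr
          exact rpow_le_rpow_abs_mul _ one_le_two hm hu
      _ ≤ (2 * p + 4) * (2 ^ |p - 1| * m ^ (p - 1)) * s := by nlinarith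

def sqrtBall (x₀ s : ℝ) : Set ℝ := {x | 0 ≤ x ∧ |√x - √x₀| < s}

theorem Ioo_subset_sqrtBall (x₀ : ℝ) {s : ℝ} (hs : 0 < s) :
    Ioo (max (√x₀ - s) 0 ^ 2) ((√x₀ + s) ^ 2) ⊆ sqrtBall x₀ s := by
  rintro x ⟨hlx, hxu⟩
  have hl : 0 ≤ max (√x₀ - s) 0 := le_max_right _ _
  have hlx' := (lt_sqrt hl).2 hlx
  have hxu' := (sqrt_lt' (by positivity)).2 hxu
  refine ⟨(sq_nonneg _).trans hlx.le, abs_lt.2 ⟨?_, by linarith⟩⟩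
  linarith [le_max_left (√x₀ - s) 0]

theorem sqrtBall_subset_Icc (x₀ s : ℝ) :
    sqrtBall x₀ s ⊆ Icc (max (√x₀ - s) 0 ^ 2) ((√x₀ + s) ^ 2) := by
  rintro x ⟨hx, hxs⟩
  rw [abs_lt] at hxs
  have hsx := sqrt_nonneg x
  constructor
  · rw [← le_sqrt (le_max_right _ _) hx]
    exact max_le (by linarith) hsx
  · rw [← sqrt_le_left (by linarith)]
    linarith

theorem integral_rpow_sqrtBall {β : ℝ} (hβ : 0 < β) (x₀ : ℝ) {s : ℝ} (hs : 0 < s) :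
    ∫ x in sqrtBall x₀ s, x ^ (β - 1) =
      ((√x₀ + s) ^ (2 * β) - max (√x₀ - s) 0 ^ (2 * β)) / β := by
  set l := max (√x₀ - s) 0
  set u := √x₀ + s
  have hl : 0 ≤ l := le_max_right _ _
  have hlu : l ^ 2 ≤ u ^ 2 := by
    gcongr; exact max_le (by linarith) (by positivity)
  have hae : sqrtBall x₀ s =ᵐ[volume] Ioc (l ^ 2) (u ^ 2) := by
    refine (ae_eq_of_subset_of_measure_ge (Ioo_subset_sqrtBall x₀ hs) ?_
      measurableSet_Ioo.nullMeasurableSet ?_).symm.trans Ioo_ae_eq_Ioc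
    · exact (measure_mono (sqrtBall_subset_Icc x₀ s)).trans_eq (by rw [volume_Icc, volume_Ioo])
    · exact ne_top_of_le_ne_top (by simp) (measure_mono (sqrtBall_subset_Icc x₀ s))
  rw [setIntegral_congr_set hae, ← intervalIntegral.integral_of_le hlu,
    integral_rpow (Or.inl (by linarith)), sub_add_cancel, ← rpow_natCast_mul hl,
    ← rpow_natCast_mul (by positivity)]
  norm_num

theorem mul_rpow_div_le_integral_rpow_sqrtBall {β : ℝ} (hβ : 0 < β) (x₀ : ℝ) {s : ℝ}
    (hs : 0 < s) :
    s * max √x₀ s ^ (2 * β - 1) / 2 ^ |2 * β - 1| ≤ ∫ x in sqrtBall x₀ s, x ^ (β - 1) := by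
  rw [integral_rpow_sqrtBall hβ x₀ hs, le_div_iff₀ hβ]
  exact le_of_eq_of_le (by ring)
    (mul_rpow_div_le_add_rpow_sub_max_rpow (by positivity) (sqrt_nonneg x₀) hs)

theorem integral_rpow_sqrtBall_le {β : ℝ} (hβ : 0 < β) (x₀ : ℝ) {s : ℝ} (hs : 0 < s) :
    ∫ x in sqrtBall x₀ s, x ^ (β - 1) ≤
      4 * (1 + β⁻¹) * 2 ^ |2 * β - 1| * s * max √x₀ s ^ (2 * β - 1) := by
  rw [integral_rpow_sqrtBall hβ x₀ hs, div_le_iff₀ hβ]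
  refine (add_rpow_sub_max_rpow_le (by positivity) (sqrt_nonneg x₀) hs).trans_eq ?_
  field_simp
  ring

theorem exists_pos_forall_le_of_one_le {ρ : ℝ → ℝ → ℝ} {c : ℝ}
    (hnonneg : ∀ x ∈ Ici (0:ℝ), ∀ y ∈ Ici (0:ℝ), 0 ≤ ρ x y)
    (hsep : ∀ x ∈ Ici (0:ℝ), ∀ y ∈ Ici (0:ℝ), ρ x y = 0 → x = y)
    (htri : ∀ x ∈ Ici (0:ℝ), ∀ y ∈ Ici (0:ℝ), ∀ z ∈ Ici (0:ℝ), ρ x z ≤ ρ x y + ρ y z)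
    (hc : 0 < c)
    (hcomp : ∀ x ∈ Ici (1:ℝ), ∀ y ∈ Ici (1:ℝ), c * |x - y| ≤ ρ x y ∧ ρ x y ≤ c⁻¹ * |x - y|) :
    ∃ ι > 0, ∀ x ∈ Ici (1:ℝ), ι ≤ ρ 0 x := by
  have hIci : Ici (1:ℝ) ⊆ Ici 0 := Ici_subset_Ici.2 zero_le_one
  have hlip : LipschitzOnWith (Real.toNNReal c⁻¹) (ρ 0) (Ici 1) :=
    LipschitzOnWith.of_le_add_mul' _ fun x hx y hy => by
      rw [dist_comm, Real.dist_eq]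
      linarith [htri 0 self_mem_Ici y (hIci hy) x (hIci hx), (hcomp y hy x hx).2]
  have hρ10 : 0 ≤ ρ 1 0 := hnonneg 1 (hIci self_mem_Ici) 0 self_mem_Ici
  obtain ⟨M, hM⟩ : ∃ M, M = 1 + (ρ 1 0 + 1) / c := ⟨_, rfl⟩
  have hfar : ∀ x ∈ Ici M, 1 ≤ ρ 0 x := by
    intro x hx
    rw [mem_Ici, hM] at hx
    have hx1 : 1 ≤ x := by linarith [div_nonneg (by linarith : 0 ≤ ρ 1 0 + 1) hc.le]
    have hMx : ρ 1 0 + 1 ≤ c * (x - 1) := by rw [← div_le_iff₀' hc]; linarith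
    have h1x := (hcomp 1 self_mem_Ici x hx1).1
    rw [abs_sub_comm, abs_of_nonneg (sub_nonneg.2 hx1)] at h1x
    have h10x := htri 1 (hIci self_mem_Ici) 0 self_mem_Ici x (hIci hx1)
    linarith
  have hpos : ∀ x ∈ Icc 1 M, 0 < ρ 0 x := fun x hx =>
    (hnonneg 0 self_mem_Ici x (hIci hx.1)).lt_of_ne fun h => by
      linarith [hx.1, hsep 0 self_mem_Ici x (hIci hx.1) h.symm]
  obtain ⟨ι, hι, hle⟩ :=
    isCompact_Icc.exists_forall_le' (hlip.continuousOn.mono Icc_subset_Ici_self) hpos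
  refine ⟨min ι 1, lt_min hι one_pos, fun x hx => ?_⟩
  rcases le_or_gt x M with hxM | hxM
  · exact (min_le_left _ _).trans (hle x ⟨hx, hxM⟩)
  · exact (min_le_right _ _).trans (hfar x hxM.le)

theorem rpow_max_div_le_rpow_max_mul (q : ℝ) {A c r : ℝ} (hA : 0 ≤ A) (hc : 0 < c) (hc1 : c ≤ 1)
    (hr : 0 < r) : max A r ^ q / c⁻¹ ^ |q| ≤ max A (c * r) ^ q := by
  refine rpow_div_rpow_abs_le q (one_le_inv₀ hc |>.2 hc1) (lt_max_of_lt_right hr) ⟨?_, ?_⟩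
  · rw [div_inv_eq_mul, mul_comm, mul_max_of_nonneg _ _ hc.le]
    exact max_le_max (mul_le_of_le_one_left hA hc1) le_rfl
  · exact (max_le_max le_rfl (mul_le_of_le_one_left hr.le hc1)).trans
      (le_mul_of_one_le_left (by positivity) (one_le_inv₀ hc |>.2 hc1))

theorem rpow_max_div_le (q : ℝ) {A c r : ℝ} (hA : 0 ≤ A) (hc : 0 < c) (hc1 : c ≤ 1)
    (hr : 0 < r) : max A (r / c) ^ q ≤ c⁻¹ ^ |q| * max A r ^ q := by
  refine rpow_le_rpow_abs_mul q (one_le_inv₀ hc |>.2 hc1) (lt_max_of_lt_right hr) ⟨?_, ?_⟩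
  · rw [div_inv_eq_mul]
    exact (mul_le_of_le_one_right (by positivity) hc1).trans
      (max_le_max le_rfl (le_div_self hr.le hc hc1))
  · rw [mul_max_of_nonneg _ _ (by positivity), div_eq_inv_mul]
    exact max_le_max (le_mul_of_one_le_left hA (one_le_inv₀ hc |>.2 hc1)) le_rfl

theorem setIntegral_rpow_mono_set {β b : ℝ} (hβ : 0 < β) {s t : Set ℝ} (hst : s ⊆ t)
    (ht : t ⊆ Icc 0 b) : ∫ x in s, x ^ (β - 1) ≤ ∫ x in t, x ^ (β - 1) := by
  have hint : IntegrableOn (fun x : ℝ => x ^ (β - 1)) (Icc 0 b) :=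
    (integrableOn_Icc_iff_integrableOn_Ioc).2 <|
      (intervalIntegral.intervalIntegrable_rpow' (by linarith)).1.mono_set Ioc_subset_uIoc
  refine setIntegral_mono_set (hint.mono_set ht) ?_ hst.eventuallyLE
  exact ae_restrict_of_ae_restrict_of_subset ht
    (ae_restrict_of_forall_mem measurableSet_Icc fun x hx => rpow_nonneg hx.1 _)

def ComparableSqrtDist (ρ : ℝ → ℝ → ℝ) (c : ℝ) : Prop :=
  ∀ x ∈ Icc (0:ℝ) 1, ∀ y ∈ Icc (0:ℝ) 1, c * |√x - √y| ≤ ρ x y ∧ ρ x y ≤ c⁻¹ * |√x - √y|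

theorem ball_subset_Icc_zero_one {ρ : ℝ → ℝ → ℝ} {c ι x₀ r : ℝ}
    (htri : ∀ x ∈ Ici (0:ℝ), ∀ y ∈ Ici (0:ℝ), ∀ z ∈ Ici (0:ℝ), ρ x z ≤ ρ x y + ρ y z)
    (hcomp : ComparableSqrtDist ρ c)
    (hfar : ∀ x ∈ Ici (1:ℝ), ι ≤ ρ 0 x) (hx₀ : x₀ ∈ Icc 0 1) (hr : c⁻¹ * √x₀ + r ≤ ι) :
    {x | 0 ≤ x ∧ ρ x₀ x < r} ⊆ Icc 0 1 := by
  rintro x ⟨hx, hxr⟩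
  refine ⟨hx, le_of_not_gt fun hx1 => ?_⟩
  have h0x₀ := (hcomp 0 ⟨le_rfl, zero_le_one⟩ x₀ hx₀).2
  rw [sqrt_zero, zero_sub, abs_neg, abs_of_nonneg (sqrt_nonneg _)] at h0x₀
  linarith [htri 0 self_mem_Ici x₀ hx₀.1 x hx, hfar x hx1.le]

theorem sqrtBall_subset_ball {ρ : ℝ → ℝ → ℝ} {c x₀ r : ℝ}
    (hcomp : ComparableSqrtDist ρ c)
    (hc : 0 < c) (hx₀ : x₀ ∈ Icc 0 1) (hr : √x₀ + c * r ≤ 1) :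
    sqrtBall x₀ (c * r) ⊆ {x | 0 ≤ x ∧ ρ x₀ x < r} := by
  rintro x ⟨hx, hxr⟩
  have hx1 : x ≤ 1 := by
    have hxlt := (sqrt_lt' one_pos).1 (by linarith [(abs_lt.1 hxr).2] : √x < 1)
    linarith
  refine ⟨hx, (hcomp x₀ hx₀ x ⟨hx, hx1⟩).2.trans_lt ?_⟩
  rw [abs_sub_comm]
  calc c⁻¹ * |√x - √x₀| < c⁻¹ * (c * r) := by gcongr
    _ = r := inv_mul_cancel_left₀ hc.ne' r

theorem ball_subset_sqrtBall {ρ : ℝ → ℝ → ℝ} {c x₀ r : ℝ}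
    (hcomp : ComparableSqrtDist ρ c)
    (hc : 0 < c) (hx₀ : x₀ ∈ Icc 0 1) (hball : {x | 0 ≤ x ∧ ρ x₀ x < r} ⊆ Icc 0 1) :
    {x | 0 ≤ x ∧ ρ x₀ x < r} ⊆ sqrtBall x₀ (r / c) := by
  intro x hx
  refine ⟨hx.1, ?_⟩
  rw [lt_div_iff₀ hc, abs_sub_comm, mul_comm]
  exact ((hcomp x₀ hx₀ x (hball hx)).1).trans_lt hx.2

theorem le_integral_rpow_ball {ρ : ℝ → ℝ → ℝ} {c β x₀ r : ℝ} (hcomp : ComparableSqrtDist ρ c)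
    (hβ : 0 < β) (hc : 0 < c) (hc1 : c ≤ 1) (hr : 0 < r) (hx₀ : x₀ ∈ Icc 0 1)
    (hsqrt : √x₀ + c * r ≤ 1) (hball : {x | 0 ≤ x ∧ ρ x₀ x < r} ⊆ Icc 0 1) :
    c / c⁻¹ ^ |2 * β - 1| / 2 ^ |2 * β - 1| * r * max √x₀ r ^ (2 * β - 1) ≤
      ∫ x in {x | 0 ≤ x ∧ ρ x₀ x < r}, x ^ (β - 1) := by
  set q := 2 * β - 1
  calc c / c⁻¹ ^ |q| / 2 ^ |q| * r * max √x₀ r ^ q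
        = c * r * (max √x₀ r ^ q / c⁻¹ ^ |q|) / 2 ^ |q| := by ring
    _ ≤ c * r * max √x₀ (c * r) ^ q / 2 ^ |q| := by
        gcongr; exact rpow_max_div_le_rpow_max_mul q (sqrt_nonneg x₀) hc hc1 hr
    _ ≤ ∫ x in sqrtBall x₀ (c * r), x ^ (β - 1) :=
        mul_rpow_div_le_integral_rpow_sqrtBall hβ x₀ (by positivity)
    _ ≤ _ := setIntegral_rpow_mono_set hβ (sqrtBall_subset_ball hcomp hc hx₀ hsqrt) hball

theorem integral_rpow_ball_le {ρ : ℝ → ℝ → ℝ} {c β x₀ r : ℝ} (hcomp : ComparableSqrtDist ρ c)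
    (hβ : 0 < β) (hc : 0 < c) (hc1 : c ≤ 1) (hr : 0 < r) (hx₀ : x₀ ∈ Icc 0 1)
    (hball : {x | 0 ≤ x ∧ ρ x₀ x < r} ⊆ Icc 0 1) :
    ∫ x in {x | 0 ≤ x ∧ ρ x₀ x < r}, x ^ (β - 1) ≤
      4 * (1 + β⁻¹) * 2 ^ |2 * β - 1| * c⁻¹ * c⁻¹ ^ |2 * β - 1| * r * max √x₀ r ^ (2 * β - 1) := by
  set q := 2 * β - 1
  calc _ ≤ ∫ x in sqrtBall x₀ (r / c), x ^ (β - 1) :=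
        setIntegral_rpow_mono_set hβ (ball_subset_sqrtBall hcomp hc hx₀ hball)
          ((sqrtBall_subset_Icc x₀ _).trans (Icc_subset_Icc (sq_nonneg _) le_rfl))
    _ ≤ 4 * (1 + β⁻¹) * 2 ^ |q| * (r / c) * max √x₀ (r / c) ^ q :=
        integral_rpow_sqrtBall_le hβ x₀ (by positivity)
    _ ≤ 4 * (1 + β⁻¹) * 2 ^ |q| * (r / c) * (c⁻¹ ^ |q| * max √x₀ r ^ q) := by
        gcongr; exact rpow_max_div_le q (sqrt_nonneg x₀) hc hc1 hr
    _ = _ := by ring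

theorem measure_of_balls_kimura_general (ρ : ℝ → ℝ → ℝ)
    (hnonneg : ∀ x ∈ Set.Ici (0:ℝ), ∀ y ∈ Set.Ici (0:ℝ), 0 ≤ ρ x y)
    (hsep : ∀ x ∈ Set.Ici (0:ℝ), ∀ y ∈ Set.Ici (0:ℝ), ρ x y = 0 → x = y)
    (htri : ∀ x ∈ Set.Ici (0:ℝ), ∀ y ∈ Set.Ici (0:ℝ), ∀ z ∈ Set.Ici (0:ℝ),
      ρ x z ≤ ρ x y + ρ y z)
    (c : ℝ) (hc : 0 < c)
    (hcomp1 : ∀ x ∈ Set.Icc (0:ℝ) 1, ∀ y ∈ Set.Icc (0:ℝ) 1,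
      c * |Real.sqrt x - Real.sqrt y| ≤ ρ x y ∧ ρ x y ≤ c⁻¹ * |Real.sqrt x - Real.sqrt y|)
    (hcomp2 : ∀ x ∈ Set.Ici (1:ℝ), ∀ y ∈ Set.Ici (1:ℝ),
      c * |x - y| ≤ ρ x y ∧ ρ x y ≤ c⁻¹ * |x - y|) :
    ∀ β : ℝ, 0 < β → ∃ C₁ C₂ r₀ : ℝ, 0 < C₁ ∧ C₁ ≤ C₂ ∧ 0 < r₀ ∧
      ∀ x0 ∈ Set.Icc (0:ℝ) r₀, ∀ r ∈ Set.Ioo (0:ℝ) (r₀ / 2),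
        C₁ * r * (max (Real.sqrt x0) r) ^ (2 * β - 1)
            ≤ (∫ x in {x : ℝ | 0 ≤ x ∧ ρ x0 x < r}, x ^ (β - 1)) ∧
        (∫ x in {x : ℝ | 0 ≤ x ∧ ρ x0 x < r}, x ^ (β - 1))
            ≤ C₂ * r * (max (Real.sqrt x0) r) ^ (2 * β - 1) := by
  intro β hβ
  have hc1 : c ≤ 1 := by
    have h01 := hcomp1 0 ⟨le_rfl, zero_le_one⟩ 1 ⟨zero_le_one, le_rfl⟩
    norm_num at h01
    nlinarith [h01.1.trans h01.2, mul_inv_cancel₀ hc.ne']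
  obtain ⟨ι, hι, hfar⟩ := exists_pos_forall_le_of_one_le hnonneg hsep htri hc hcomp2
  set δ := min (c * ι) 1 / 2
  have hδ : 0 < δ := by positivity
  have hδ1 : δ ≤ 1 / 2 := div_le_div_of_nonneg_right (min_le_right _ _) zero_le_two
  have hδι : δ ≤ c * ι / 2 := div_le_div_of_nonneg_right (min_le_left _ _) zero_le_two
  set C₁ := c / c⁻¹ ^ |2 * β - 1| / 2 ^ |2 * β - 1|
  set C₂ := 4 * (1 + β⁻¹) * 2 ^ |2 * β - 1| * c⁻¹ * c⁻¹ ^ |2 * β - 1|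
  refine ⟨C₁, max C₁ C₂, δ ^ 2, by positivity, le_max_left _ _, by positivity, ?_⟩
  rintro x₀ ⟨hx₀, hx₀δ⟩ r ⟨hr, hrδ⟩
  have hA : √x₀ ≤ δ := (sqrt_le_sqrt hx₀δ).trans_eq (sqrt_sq hδ.le)
  have hx₀1 : x₀ ∈ Icc 0 1 := ⟨hx₀, hx₀δ.trans (by nlinarith)⟩
  have hrι : r ≤ ι / 2 := by nlinarith [mul_le_of_le_one_left hι.le hc1]
  have hball := ball_subset_Icc_zero_one htri hcomp1 hfar hx₀1 (r := r) (by
    nlinarith [(inv_mul_le_iff₀ hc).2 ((hA.trans hδι).trans_eq (mul_div_assoc _ _ _))])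
  have hsqrt : √x₀ + c * r ≤ 1 := by nlinarith [mul_le_of_le_one_left hr.le hc1]
  refine ⟨le_integral_rpow_ball hcomp1 hβ hc hc1 hr hx₀1 hsqrt hball,
    (integral_rpow_ball_le hcomp1 hβ hc hc1 hr hx₀1 hball).trans ?_⟩
  gcongr
  exact le_max_right _ _

/-- Measure of metric balls for the one-dimensional Kimura intrinsic metric: if `ρ` is a
metric on `[0,∞)` comparable to the square-root distance on `[0,1]` and to the Euclidean
distance on `[1,∞)`, then for each `β > 0` the weighted measure `μ(B_r(x⁰)) = ∫_{B_r(x⁰)}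
x^{β-1} dx` is comparable to `r (max(√x⁰, r))^{2β-1}` for `x⁰ ∈ [0,r₀]`, `r ∈ (0,r₀/2)`. -/
theorem measure_of_balls_kimura (ρ : ℝ → ℝ → ℝ)
    (hsymm : ∀ x ∈ Set.Ici (0:ℝ), ∀ y ∈ Set.Ici (0:ℝ), ρ x y = ρ y x)
    (hnonneg : ∀ x ∈ Set.Ici (0:ℝ), ∀ y ∈ Set.Ici (0:ℝ), 0 ≤ ρ x y)
    (hself : ∀ x ∈ Set.Ici (0:ℝ), ρ x x = 0)
    (hsep : ∀ x ∈ Set.Ici (0:ℝ), ∀ y ∈ Set.Ici (0:ℝ), ρ x y = 0 → x = y)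
    (htri : ∀ x ∈ Set.Ici (0:ℝ), ∀ y ∈ Set.Ici (0:ℝ), ∀ z ∈ Set.Ici (0:ℝ),
      ρ x z ≤ ρ x y + ρ y z)
    (c : ℝ) (hc : 0 < c)
    (hcomp1 : ∀ x ∈ Set.Icc (0:ℝ) 1, ∀ y ∈ Set.Icc (0:ℝ) 1,
      c * |Real.sqrt x - Real.sqrt y| ≤ ρ x y ∧ ρ x y ≤ c⁻¹ * |Real.sqrt x - Real.sqrt y|)
    (hcomp2 : ∀ x ∈ Set.Ici (1:ℝ), ∀ y ∈ Set.Ici (1:ℝ),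
      c * |x - y| ≤ ρ x y ∧ ρ x y ≤ c⁻¹ * |x - y|) :
    ∀ β : ℝ, 0 < β → ∃ C₁ C₂ r₀ : ℝ, 0 < C₁ ∧ C₁ ≤ C₂ ∧ 0 < r₀ ∧
      ∀ x0 ∈ Set.Icc (0:ℝ) r₀, ∀ r ∈ Set.Ioo (0:ℝ) (r₀ / 2),
        C₁ * r * (max (Real.sqrt x0) r) ^ (2 * β - 1)
            ≤ (∫ x in {x : ℝ | 0 ≤ x ∧ ρ x0 x < r}, x ^ (β - 1)) ∧
        (∫ x in {x : ℝ | 0 ≤ x ∧ ρ x0 x < r}, x ^ (β - 1))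
            ≤ C₂ * r * (max (Real.sqrt x0) r) ^ (2 * β - 1) :=
  measure_of_balls_kimura_general ρ hnonneg hsep htri c hc hcomp1 hcomp2
end
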